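/- A graph G has a proper (p:q)-colouring if and only if the strong product G ⊠ K_q has a proper p-colouring. -/

import Mathlib

open SimpleGraph

/-- The strong product of two simple graphs. -/
def strongProd {α β : Type*} (G : SimpleGraph α) (H : SimpleGraph β) :
    SimpleGraph (α × β) where
  Adj x y := x ≠ y ∧ (x.1 = y.1 ∨ G.Adj x.1 y.1) ∧ (x.2 = y.2 ∨ H.Adj x.2 y.2)
  symm := ⟨fun x y => by
    rintro ⟨h1, h2, h3⟩
    exact ⟨h1.symm, h2.imp Eq.symm (fun h => G.adj_symm h), h3.imp Eq.symm (fun h => H.adj_symm h)⟩⟩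
  loopless := ⟨fun x => by simp⟩

/-- The strong product of a family of simple graphs. -/
def strongProdPi {d : ℕ} {V : Fin d → Type*} (G : ∀ i, SimpleGraph (V i)) :
    SimpleGraph (∀ i, V i) where
  Adj x y := x ≠ y ∧ ∀ i, x i = y i ∨ (G i).Adj (x i) (y i)
  symm := ⟨fun x y ⟨h1, h2⟩ => ⟨h1.symm, fun i => (h2 i).imp Eq.symm (fun h => (G i).adj_symm h)⟩⟩
  loopless := ⟨fun x => by simp⟩

/-- Every connected component of the subgraph of `G` induced on `S` has at most `c`
vertices. -/
def ClusterBound {α : Type*} (G : SimpleGraph α) (S : Set α) (c : ℕ) : Prop :=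
  ∀ v : S, ((G.induce S).connectedComponentMk v).supp.ncard ≤ c

/-- `G` has a `k`-colouring with clustering `c`. -/
def HasClusteredColoring {α : Type*} (G : SimpleGraph α) (k c : ℕ) : Prop :=
  ∃ f : α → Fin k, ∀ i : Fin k, ClusterBound G {v | f v = i} c

/-- `f` is a `(p:q)`-colouring: each vertex gets a `q`-element subset of `Fin p`. -/
def IsPQColoring {α : Type*} (p q : ℕ) (f : α → Finset (Fin p)) : Prop :=
  ∀ v, (f v).card = q

/-- `f` is a proper `(p:q)`-colouring of `G`. -/
def IsProperPQColoring {α : Type*} (G : SimpleGraph α) (p q : ℕ)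
    (f : α → Finset (Fin p)) : Prop :=
  IsPQColoring p q f ∧ ∀ ⦃x y⦄, G.Adj x y → Disjoint (f x) (f y)

/-- The set-colouring `f` has clustering `c`: for each colour, each monochromatic
component has at most `c` vertices. -/
def PQClusterBound {α : Type*} (G : SimpleGraph α) {p : ℕ}
    (f : α → Finset (Fin p)) (c : ℕ) : Prop :=
  ∀ i : Fin p, ClusterBound G {v | i ∈ f v} c

/-- `G` has a `(p:q)`-colouring with clustering `c`. -/
def HasPQClusteredColoring {α : Type*} (G : SimpleGraph α) (p q c : ℕ) : Prop :=
  ∃ f : α → Finset (Fin p), IsPQColoring p q f ∧ PQClusterBound G f c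

/-- `ord` is a consistent `(p:q)`-colouring of `G` (each vertex's `q` colours are ordered,
with the `i`-th colour of `x` different from the `j`-th colour of `y` for every edge `xy`
and all distinct `i, j`). -/
def IsConsistentPQColoring {α : Type*} (G : SimpleGraph α) (p q : ℕ)
    (ord : α → Fin q → Fin p) : Prop :=
  (∀ v, Function.Injective (ord v)) ∧
    ∀ ⦃x y⦄, G.Adj x y → ∀ i j : Fin q, i ≠ j → ord x i ≠ ord y j

/-- The colour set of a vertex in an ordered colouring. -/
def ordColors {α : Type*} {p q : ℕ} (ord : α → Fin q → Fin p) (v : α) : Finset (Fin p) :=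
  Finset.image (ord v) Finset.univ

/-- `G` has a consistent `(p:q)`-colouring with clustering `c`. -/
def HasConsistentClusteredColoring {α : Type*} (G : SimpleGraph α) (p q c : ℕ) : Prop :=
  ∃ ord : α → Fin q → Fin p, IsConsistentPQColoring G p q ord ∧
    PQClusterBound G (ordColors ord) c

/-- The fractional chromatic number of `G`: the infimum of `p/q` over proper
`(p:q)`-colourings of `G`. -/
noncomputable def fracChrom {α : Type*} (G : SimpleGraph α) : ℝ :=
  sInf {t : ℝ | ∃ p q : ℕ, 0 < q ∧
    (∃ f : α → Finset (Fin p), IsProperPQColoring G p q f) ∧ t = (p : ℝ) / q}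

/-- The independence number of `G`. -/
noncomputable def indepNum {α : Type*} (G : SimpleGraph α) : ℕ :=
  sSup {n | ∃ s : Finset α, (∀ x ∈ s, ∀ y ∈ s, ¬ G.Adj x y) ∧ s.card = n}

section StrongProdTop

variable {α β : Type*} {G : SimpleGraph α}

lemma strongProd_top_adj_of_adj {v w : α} (h : G.Adj v w) (i j : β) :
    (strongProd G ⊤).Adj (v, i) (w, j) :=
  ⟨fun e => h.ne (congrArg Prod.fst e), Or.inr h, (eq_or_ne i j).imp_right (top_adj i j).mpr⟩

lemma strongProd_top_adj_of_ne (v : α) {i j : β} (h : i ≠ j) :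
    (strongProd G ⊤).Adj (v, i) (v, j) :=
  ⟨fun e => h (congrArg Prod.snd e), Or.inl rfl, Or.inr ((top_adj i j).mpr h)⟩

end StrongProdTop

section Colorings

variable {α : Type*} {G : SimpleGraph α} {p q : ℕ}

/-- Give `(v, i)` the `i`-th smallest colour of `f v`. -/
lemma IsProperPQColoring.colorable_strongProd_top {f : α → Finset (Fin p)}
    (hf : IsProperPQColoring G p q f) : (strongProd G (⊤ : SimpleGraph (Fin q))).Colorable p := by
  obtain ⟨hcard, hdisj⟩ := hf
  refine ⟨Coloring.mk (fun x => (f x.1).orderEmbOfFin (hcard x.1) x.2) ?_⟩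
  rintro ⟨v, i⟩ ⟨w, j⟩ ⟨hne, hvw | hvw, -⟩ hcol
  · subst hvw
    exact hne (Prod.ext rfl (((f v).orderEmbOfFin (hcard v)).injective hcol))
  · refine Finset.disjoint_left.mp (hdisj hvw) ?_ (Finset.orderEmbOfFin_mem (f w) (hcard w) j)
    exact hcol ▸ Finset.orderEmbOfFin_mem (f v) (hcard v) i

/-- The colour set of `v` is the set of colours on its fibre `{v} × Fin q`. -/
lemma SimpleGraph.Colorable.exists_isProperPQColoring_of_strongProd_top
    (hC : (strongProd G (⊤ : SimpleGraph (Fin q))).Colorable p) :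
    ∃ f : α → Finset (Fin p), IsProperPQColoring G p q f := by
  obtain ⟨C⟩ := hC
  refine ⟨fun v => Finset.univ.image fun i => C (v, i), fun v => ?_, fun x y hxy => ?_⟩
  · have hinj : Function.Injective fun i : Fin q => C (v, i) := fun i j hcol =>
      by_contra fun hne => C.valid (strongProd_top_adj_of_ne v hne) hcol
    rw [Finset.card_image_of_injective _ hinj, Finset.card_univ, Fintype.card_fin]
  · simp only [Finset.disjoint_left, Finset.mem_image, Finset.mem_univ, true_and]
    rintro _ ⟨i, rfl⟩ ⟨j, hcol⟩
    exact C.valid (strongProd_top_adj_of_adj hxy i j) hcol.symm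

end Colorings

theorem stmt2_general {α : Type*} (G : SimpleGraph α) (p q : ℕ) :
    (∃ f : α → Finset (Fin p), IsProperPQColoring G p q f) ↔
      (strongProd G (⊤ : SimpleGraph (Fin q))).Colorable p :=
  ⟨fun ⟨_, hf⟩ => hf.colorable_strongProd_top,
    fun hC => hC.exists_isProperPQColoring_of_strongProd_top⟩

theorem stmt2 {α : Type*} (G : SimpleGraph α) (p q : ℕ) (hq : 1 ≤ q) (hpq : q ≤ p) :
    (∃ f : α → Finset (Fin p), IsProperPQColoring G p q f) ↔
      (strongProd G (⊤ : SimpleGraph (Fin q))).Colorable p :=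
  stmt2_general G p q
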